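/- arXiv:math/9810192 — 3 statements merged into one kernel-verified Lean document; each statement's English description precedes it below -/
import Mathlib

section
/- Let G be a group, let X and Y be finite subgroups of G, let E₁ be a proper subgroup of X and let E₂ be a proper subgroup of Y, and suppose that the subgroup ⟨E₁, E₂⟩ of G generated by E₁ and E₂ is finite. Then 1/|E₁| + 1/|E₂| − 1/|⟨E₁, E₂⟩| − 1/|X| − 1/|Y| ≥ 0. -/
/-- The inequality showing that `η` does not increase under a Type 6 fold: if `E₁ < X`
and `E₂ < Y` are proper subgroups with `X`, `Y` and `⟨E₁, E₂⟩` finite, then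
`1/|E₁| + 1/|E₂| - 1/|⟨E₁, E₂⟩| - 1/|X| - 1/|Y| ≥ 0`. -/
theorem type_six_fold_inequality {G : Type*} [Group G] (E₁ E₂ X Y : Subgroup G)
    (hX : (X : Set G).Finite) (hY : (Y : Set G).Finite)
    (hE₁ : E₁ < X) (hE₂ : E₂ < Y)
    (hjoin : ((E₁ ⊔ E₂ : Subgroup G) : Set G).Finite) :
    0 ≤ 1 / (Nat.card E₁ : ℝ) + 1 / (Nat.card E₂ : ℝ)
        - 1 / (Nat.card ↥(E₁ ⊔ E₂) : ℝ) - 1 / (Nat.card X : ℝ) - 1 / (Nat.card Y : ℝ) := by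
  haveI : Finite X := hX.to_subtype
  haveI : Finite Y := hY.to_subtype
  haveI : Finite ↥(E₁ ⊔ E₂) := hjoin.to_subtype
  haveI : Finite E₁ := Finite.Set.subset _ hE₁.le
  haveI : Finite E₂ := Finite.Set.subset _ hE₂.le
  set a := Nat.card E₁ with ha'
  set b := Nat.card E₂ with hb'
  set j := Nat.card ↥(E₁ ⊔ E₂) with hj'
  set x := Nat.card X with hx'
  set y := Nat.card Y with hy'
  have ha : 0 < a := Nat.card_pos
  have hb : 0 < b := Nat.card_pos
  have hjpos : 0 < j := Nat.card_pos
  -- a < x and a ∣ x give 2a ≤ x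
  have key : ∀ (H K : Subgroup G), H < K → ∀ _ : Finite K,
      2 * Nat.card H ≤ Nat.card K := by
    intro H K hlt _
    haveI : Finite H := Finite.Set.subset _ hlt.le
    obtain ⟨k, hk⟩ := Subgroup.card_dvd_of_le hlt.le
    have hH : 0 < Nat.card H := Nat.card_pos
    have hne : Nat.card H ≠ Nat.card K := by
      intro h
      exact hlt.ne (Subgroup.eq_of_le_of_card_ge hlt.le h.ge)
    have hK : 0 < Nat.card K := Nat.card_pos
    have hk2 : 2 ≤ k := by
      rcases Nat.lt_or_ge k 2 with h | h
      · interval_cases k <;> omega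
      · exact h
    calc 2 * Nat.card H ≤ Nat.card H * k := by nlinarith
      _ = Nat.card K := hk.symm
  have hax : 2 * a ≤ x := key E₁ X hE₁ ‹_›
  have hby : 2 * b ≤ y := key E₂ Y hE₂ ‹_›
  have haj : a ≤ j := Nat.le_of_dvd hjpos (Subgroup.card_dvd_of_le le_sup_left)
  have hbj : b ≤ j := Nat.le_of_dvd hjpos (Subgroup.card_dvd_of_le le_sup_right)
  -- pass to reals
  have haR : (0:ℝ) < a := by exact_mod_cast ha
  have hbR : (0:ℝ) < b := by exact_mod_cast hb
  have hjR : (0:ℝ) < j := by exact_mod_cast hjpos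
  have hxR : 2 * (a:ℝ) ≤ x := by exact_mod_cast hax
  have hyR : 2 * (b:ℝ) ≤ y := by exact_mod_cast hby
  have hajR : (a:ℝ) ≤ j := by exact_mod_cast haj
  have hbjR : (b:ℝ) ≤ j := by exact_mod_cast hbj
  have h1 : 1 / (x:ℝ) ≤ 1 / (2*a) := one_div_le_one_div_of_le (by positivity) hxR
  have h2 : 1 / (y:ℝ) ≤ 1 / (2*b) := one_div_le_one_div_of_le (by positivity) hyR
  have h3 : 1 / (j:ℝ) ≤ 1 / (2*a) + 1 / (2*b) := by
    rcases le_total (a:ℝ) b with h | h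
    · have hjb : 1 / (j:ℝ) ≤ 1 / b := one_div_le_one_div_of_le hbR hbjR
      have : 1 / (2*(b:ℝ)) ≤ 1 / (2*a) :=
        one_div_le_one_div_of_le (by positivity) (by linarith)
      have hb2 : 1 / (b:ℝ) = 1 / (2*b) + 1 / (2*b) := by ring
      linarith
    · have hja : 1 / (j:ℝ) ≤ 1 / a := one_div_le_one_div_of_le haR hajR
      have : 1 / (2*(a:ℝ)) ≤ 1 / (2*b) :=
        one_div_le_one_div_of_le (by positivity) (by linarith)
      have ha2 : 1 / (a:ℝ) = 1 / (2*a) + 1 / (2*a) := by ring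
      linarith
  have hea : 1 / (2*(a:ℝ)) + 1 / (2*a) = 1 / a := by ring
  have heb : 1 / (2*(b:ℝ)) + 1 / (2*b) = 1 / b := by ring
  linarith
end

section
/- Let (X, d) be a pseudometric space. Suppose there are metric spaces (T_n, d_n) for n ∈ ℕ and maps θ_n : X → T_n such that for all x, y ∈ X the sequence n ↦ d_n(θ_n(x), θ_n(y)) is nonincreasing and converges to d(x, y). If every (T_n, d_n) satisfies the four-point condition, then (X, d) satisfies the four-point condition. -/
/-- If `m₁ = l.map f` and `m₁ ~ m₂`, the permutation can be lifted along `f`. -/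
lemma exists_perm_of_map_perm {α β : Type*} (f : α → β) :
    ∀ {m₁ m₂ : List β}, m₁.Perm m₂ → ∀ l : List α, m₁ = l.map f →
      ∃ l', l.Perm l' ∧ m₂ = l'.map f := by
  intro m₁ m₂ h
  induction h with
  | nil => exact fun l hl => ⟨l, .refl _, hl⟩
  | cons x p ih =>
    intro l hl
    cases l with
    | nil => simp at hl
    | cons y t =>
      simp only [List.map_cons, List.cons.injEq] at hl
      obtain ⟨rfl, ht⟩ := hl
      obtain ⟨t', pt, ht'⟩ := ih t ht
      exact ⟨y :: t', .cons y pt, by simp [ht']⟩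
  | swap x y t =>
    intro l hl
    cases l with
    | nil => simp at hl
    | cons a l₁ =>
      cases l₁ with
      | nil => simp at hl
      | cons b t₀ =>
        simp only [List.map_cons, List.cons.injEq] at hl
        obtain ⟨rfl, rfl, ht⟩ := hl
        exact ⟨b :: a :: t₀, .swap b a t₀, by simp [ht]⟩
  | trans p₁ p₂ ih₁ ih₂ =>
    intro l hl
    obtain ⟨l₁, pl₁, hl₁⟩ := ih₁ l hl
    obtain ⟨l₂, pl₂, hl₂⟩ := ih₂ l₁ hl₁
    exact ⟨l₂, pl₁.trans pl₂, hl₂⟩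

/-- A distance function satisfies the four-point condition if any four points can be
labelled `P, Q, R, S` so that `d(P,Q) + d(R,S) ≤ d(P,R) + d(Q,S) = d(Q,R) + d(P,S)`. -/
def FourPointCond {Z : Type*} (d : Z → Z → ℝ) : Prop :=
  ∀ a b c e : Z, ∃ P Q R S : Z, List.Perm [P, Q, R, S] [a, b, c, e] ∧
    d P Q + d R S ≤ d P R + d Q S ∧ d P R + d Q S = d Q R + d P S

/-- Key step in the proof that the limit of a folding sequence of R-trees is an R-tree:
if the pseudometric of `X` is the pointwise nonincreasing limit of the pullbacks of the
metrics of metric spaces `T n` along maps `θ n : X → T n`, and each `T n` satisfies the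
four-point condition, then so does `X`. -/
theorem fourPoint_of_limit {X : Type*} [PseudoMetricSpace X]
    {T : ℕ → Type*} [∀ n, MetricSpace (T n)] (θ : ∀ n, X → T n)
    (hanti : ∀ x y : X, Antitone fun n => dist (θ n x) (θ n y))
    (hlim : ∀ x y : X,
      Filter.Tendsto (fun n => dist (θ n x) (θ n y)) Filter.atTop (nhds (dist x y)))
    (h4 : ∀ n, FourPointCond fun a b : T n => dist a b) :
    FourPointCond fun a b : X => dist a b := by
  intro a b c e
  -- for each n, choose a quadruple in X realizing the four point condition at level n
  have key : ∀ n : ℕ, ∃ t : X × X × X × X,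
      List.Perm [a, b, c, e] [t.1, t.2.1, t.2.2.1, t.2.2.2] ∧
      (dist (θ n t.1) (θ n t.2.1) + dist (θ n t.2.2.1) (θ n t.2.2.2) ≤
        dist (θ n t.1) (θ n t.2.2.1) + dist (θ n t.2.1) (θ n t.2.2.2) ∧
      dist (θ n t.1) (θ n t.2.2.1) + dist (θ n t.2.1) (θ n t.2.2.2) =
        dist (θ n t.2.1) (θ n t.2.2.1) + dist (θ n t.1) (θ n t.2.2.2)) := by
    intro n
    obtain ⟨P, Q, R, S, hperm, h1, h2⟩ := h4 n (θ n a) (θ n b) (θ n c) (θ n e)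
    have hmap : [θ n a, θ n b, θ n c, θ n e] = [a, b, c, e].map (θ n) := by simp
    obtain ⟨l', pl', hl'⟩ := exists_perm_of_map_perm (θ n)
      (hmap ▸ hperm.symm) [a, b, c, e] hmap
    match l', hl' with
    | [p, q, r, s], hl' =>
      simp only [List.map_cons, List.map_nil, List.cons.injEq, and_true] at hl'
      obtain ⟨hP, hQ, hR, hS⟩ := hl'
      exact ⟨(p, q, r, s), pl', by rw [← hP, ← hQ, ← hR, ← hS]; exact ⟨h1, h2⟩⟩
  choose g hgperm hg using key
  -- the quadruples live in a finite set, so one value occurs infinitely often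
  have hrange : ∀ n, g n ∈ (({a,b,c,e} ×ˢ {a,b,c,e} ×ˢ {a,b,c,e} ×ˢ {a,b,c,e} :
      Set (X × X × X × X))) := by
    intro n
    have h1 : (g n).1 ∈ [a, b, c, e] := (hgperm n).mem_iff.2 (by simp)
    have h2 : (g n).2.1 ∈ [a, b, c, e] := (hgperm n).mem_iff.2 (by simp)
    have h3 : (g n).2.2.1 ∈ [a, b, c, e] := (hgperm n).mem_iff.2 (by simp)
    have h4' : (g n).2.2.2 ∈ [a, b, c, e] := (hgperm n).mem_iff.2 (by simp)
    simp only [List.mem_cons, List.mem_singleton, List.not_mem_nil, or_false] at h1 h2 h3 h4'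
    have m1 : (g n).1 ∈ ({a,b,c,e} : Set X) := by rcases h1 with h|h|h|h <;> simp [h]
    have m2 : (g n).2.1 ∈ ({a,b,c,e} : Set X) := by rcases h2 with h|h|h|h <;> simp [h]
    have m3 : (g n).2.2.1 ∈ ({a,b,c,e} : Set X) := by rcases h3 with h|h|h|h <;> simp [h]
    have m4 : (g n).2.2.2 ∈ ({a,b,c,e} : Set X) := by rcases h4' with h|h|h|h <;> simp [h]
    exact Set.mem_prod.2 ⟨m1, Set.mem_prod.2 ⟨m2, Set.mem_prod.2 ⟨m3, m4⟩⟩⟩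
  set K : Set (X × X × X × X) :=
    {a,b,c,e} ×ˢ {a,b,c,e} ×ˢ {a,b,c,e} ×ˢ {a,b,c,e} with hK
  have h4set : ∀ x y z w : X, ({x, y, z, w} : Set X).Finite := fun x y z w =>
    (((Set.finite_singleton w).insert z).insert y).insert x
  have hKfin : K.Finite :=
    (h4set a b c e).prod ((h4set a b c e).prod ((h4set a b c e).prod (h4set a b c e)))
  have : Finite K := hKfin
  obtain ⟨t, ht⟩ := Finite.exists_infinite_fiber (fun n : ℕ => (⟨g n, hrange n⟩ : K))
  obtain ⟨⟨p, q, r, s⟩, htK⟩ := t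
  have hinf : {n : ℕ | g n = (p, q, r, s)}.Infinite := by
    have := Set.infinite_coe_iff.1 ht
    apply this.mono
    intro n hn
    simp only [Set.mem_preimage, Set.mem_singleton_iff] at hn
    simpa using congrArg Subtype.val hn
  -- the filter of indices where the quadruple is (p,q,r,s)
  set F : Filter ℕ := Filter.atTop ⊓ Filter.principal {n | g n = (p, q, r, s)} with hF
  have hne : F.NeBot := by
    rw [hF, ← Filter.frequently_iff_neBot]
    exact Nat.frequently_atTop_iff_infinite.2 hinf
  have hev : ∀ᶠ n in F, g n = (p, q, r, s) :=
    Filter.eventually_inf_principal.2 (Filter.Eventually.of_forall fun n hn => hn)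
  obtain ⟨n₀, hn₀⟩ := hinf.nonempty
  refine ⟨p, q, r, s, ?_, ?_, ?_⟩
  · have := hgperm n₀; rw [hn₀] at this; exact this.symm
  · -- inequality passes to the limit along F
    have t1 : Filter.Tendsto (fun n => dist (θ n p) (θ n q) + dist (θ n r) (θ n s)) F
        (nhds (dist p q + dist r s)) := (((hlim p q).add (hlim r s)).mono_left inf_le_left)
    have t2 : Filter.Tendsto (fun n => dist (θ n p) (θ n r) + dist (θ n q) (θ n s)) F
        (nhds (dist p r + dist q s)) := (((hlim p r).add (hlim q s)).mono_left inf_le_left)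
    have hle : (fun n => dist (θ n p) (θ n q) + dist (θ n r) (θ n s)) ≤ᶠ[F]
        (fun n => dist (θ n p) (θ n r) + dist (θ n q) (θ n s)) := by
      filter_upwards [hev] with n hn
      have := (hg n).1
      rw [hn] at this
      exact this
    exact le_of_tendsto_of_tendsto t1 t2 hle
  · have t2 : Filter.Tendsto (fun n => dist (θ n p) (θ n r) + dist (θ n q) (θ n s)) F
        (nhds (dist p r + dist q s)) := (((hlim p r).add (hlim q s)).mono_left inf_le_left)
    have t3 : Filter.Tendsto (fun n => dist (θ n q) (θ n r) + dist (θ n p) (θ n s)) F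
        (nhds (dist q r + dist p s)) := (((hlim q r).add (hlim p s)).mono_left inf_le_left)
    have heq : (fun n => dist (θ n p) (θ n r) + dist (θ n q) (θ n s)) =ᶠ[F]
        (fun n => dist (θ n q) (θ n r) + dist (θ n p) (θ n s)) := by
      filter_upwards [hev] with n hn
      have := (hg n).2
      rw [hn] at this
      exact this
    exact tendsto_nhds_unique (t2.congr' heq) t3
end

section
/- Let (T_n) be an irreducible folding sequence of combinatorial trees, where T_n is a minimal G_n-tree with G_n finitely generated. Then there exist length functions ℓ_n assigning to each edge of T_n a strictly positive real number, constant on G_n-orbits of edges, which are compatible with the folding sequence: whenever T_{n+1} is obtained from T_n by subdivision, the two halves of each subdivided edge have ℓ_{n+1}-lengths summing to the ℓ_n-length of the original edge and every other edge of T_{n+1} has the same length as the corresponding edge of T_n; and whenever T_{n+1} is obtained from T_n by a basic fold followed by a vertex morphism, the two edges folded together have equal ℓ_n-length and every edge of T_{n+1} has the common ℓ_n-length of the edges of T_n mapping onto it. -/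
universe u

/-- A combinatorial `G`-tree: a simple graph on vertex set `V` that is a tree,
together with an action of the group `G` on `V` by graph automorphisms. -/
structure GTree (G : Type u) [Group G] : Type (u + 1) where
  V : Type u
  graph : SimpleGraph V
  isTree : graph.IsTree
  smul : G → V → V
  smul_one : ∀ x : V, smul 1 x = x
  smul_mul : ∀ (g h : G) (x : V), smul (g * h) x = smul g (smul h x)
  smul_adj : ∀ (g : G) {x y : V}, graph.Adj x y → graph.Adj (smul g x) (smul g y)

namespace GTree

variable {G : Type u} [Group G] (T : GTree G)

/-- The induced action of `G` on unordered pairs of vertices (in particular on edges). -/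
def edgeSmul (g : G) (e : Sym2 T.V) : Sym2 T.V := Sym2.map (T.smul g) e

/-- The stabilizer (as a set) of a vertex. -/
def vstab (x : T.V) : Set G := {g : G | T.smul g x = x}

/-- The setwise stabilizer (as a set) of an unordered pair of vertices (e.g. an edge). -/
def estab (e : Sym2 T.V) : Set G := {g : G | T.edgeSmul g e = e}

/-- Two vertices lie in the same `G`-orbit. -/
def sameOrbit (x y : T.V) : Prop := ∃ g : G, T.smul g x = y

/-- Two unordered pairs of vertices lie in the same `G`-orbit. -/
def edgeSameOrbit (e f : Sym2 T.V) : Prop := ∃ g : G, T.edgeSmul g e = f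

/-- The set of `G`-orbits of vertices, i.e. the vertex set of the quotient graph `G\T`. -/
def VertexOrbits : Type u := Quot T.sameOrbit

/-- The set of `G`-orbits of edges, i.e. the edge set of the quotient graph `G\T`. -/
def EdgeOrbits : Type u := Quot (fun e f : T.graph.edgeSet => T.edgeSameOrbit e.1 f.1)

/-- A `G`-tree is `G`-finite if it has finitely many orbits of edges. -/
def GFinite : Prop := Finite T.EdgeOrbits

/-- A `G`-tree is minimal if it has no proper nonempty `G`-invariant subtree,
i.e. every nonempty `G`-invariant set of vertices inducing a connected subgraph
is the whole vertex set. -/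
def Minimal : Prop :=
  ∀ W : Set T.V, W.Nonempty → (∀ (g : G), ∀ x ∈ W, T.smul g x ∈ W) →
    (T.graph.induce W).Connected → W = Set.univ

/-- The edge `{x, y}` is compressible: `x` and `y` lie in different orbits and the
stabilizer of the edge equals the stabilizer of one of its endpoints. -/
def Compressible (x y : T.V) : Prop :=
  T.graph.Adj x y ∧ ¬ T.sameOrbit x y ∧
    (T.estab s(x, y) = T.vstab x ∨ T.estab s(x, y) = T.vstab y)

/-- A `G`-tree is reduced if it has no compressible edge. -/
def Reduced : Prop := ∀ x y : T.V, ¬ T.Compressible x y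

/-- `G` acts freely on the edges: only the identity stabilizes an edge setwise. -/
def FreeOnEdges : Prop := ∀ e ∈ T.graph.edgeSet, ∀ g : G, T.edgeSmul g e = e → g = 1

end GTree

/-- A set of elements of a group generates a finitely generated subgroup,
i.e. it is generated (as a subgroup) by a finite subset of itself. -/
def IsFGSet {G : Type u} [Group G] (s : Set G) : Prop :=
  ∃ F : Set G, F.Finite ∧ F ⊆ s ∧ s ⊆ ↑(Subgroup.closure F)

/-- A morphism from a `G`-tree `S` to an `H`-tree `T`: a group homomorphism
`hom : G →* H` together with a map on vertices sending adjacent vertices to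
adjacent vertices, equivariant with respect to `hom`. -/
structure TreeMorphism {G H : Type u} [Group G] [Group H] (S : GTree G) (T : GTree H) :
    Type u where
  toFun : S.V → T.V
  hom : G →* H
  map_adj : ∀ {x y : S.V}, S.graph.Adj x y → T.graph.Adj (toFun x) (toFun y)
  equivariant : ∀ (g : G) (x : S.V), toFun (S.smul g x) = T.smul (hom g) (toFun x)

namespace TreeMorphism

variable {G H K : Type u} [Group G] [Group H] [Group K] {S : GTree G} {T : GTree H}
  {U : GTree K}

/-- Composition of tree morphisms. -/
def comp (ψ : TreeMorphism T U) (φ : TreeMorphism S T) : TreeMorphism S U where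
  toFun := ψ.toFun ∘ φ.toFun
  hom := ψ.hom.comp φ.hom
  map_adj h := ψ.map_adj (φ.map_adj h)
  equivariant g x := by
    simp only [Function.comp_apply, MonoidHom.comp_apply, φ.equivariant, ψ.equivariant]

/-- A morphism is an isomorphism if it is bijective on vertices, its group
homomorphism is bijective, and it reflects adjacency. -/
def IsIso (φ : TreeMorphism S T) : Prop :=
  Function.Bijective φ.toFun ∧ Function.Bijective φ.hom ∧
    ∀ x y : S.V, T.graph.Adj (φ.toFun x) (φ.toFun y) → S.graph.Adj x y

/-- A basic fold: the group homomorphism is an isomorphism, and the vertex map is the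
quotient map identifying two distinct vertices `x, y` adjacent to a common vertex `v`
via the smallest `G`-invariant equivalence relation identifying `x` with `y`; the
codomain carries the quotient graph structure. -/
def IsBasicFold (φ : TreeMorphism S T) : Prop :=
  Function.Bijective φ.hom ∧ Function.Surjective φ.toFun ∧
    (∃ v x y : S.V, x ≠ y ∧ S.graph.Adj v x ∧ S.graph.Adj v y ∧
      ∀ a b : S.V, φ.toFun a = φ.toFun b ↔
        Relation.EqvGen (fun p q : S.V => ∃ g : G, p = S.smul g x ∧ q = S.smul g y) a b) ∧
    ∀ a b : S.V, T.graph.Adj (φ.toFun a) (φ.toFun b) →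
      ∃ a' b' : S.V, φ.toFun a' = φ.toFun a ∧ φ.toFun b' = φ.toFun b ∧ S.graph.Adj a' b'

/-- The morphism induces an isomorphism of quotient graphs `G\S → H\T`:
it is bijective on vertex orbits and on edge orbits. -/
def InducesQuotientIso (θ : TreeMorphism S T) : Prop :=
  (∀ a b : S.V, T.sameOrbit (θ.toFun a) (θ.toFun b) → S.sameOrbit a b) ∧
  (∀ w : T.V, ∃ a : S.V, T.sameOrbit (θ.toFun a) w) ∧
  (∀ e ∈ S.graph.edgeSet, ∀ f ∈ S.graph.edgeSet,
      T.edgeSameOrbit (Sym2.map θ.toFun e) (Sym2.map θ.toFun f) → S.edgeSameOrbit e f) ∧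
  (∀ e' ∈ T.graph.edgeSet, ∃ e ∈ S.graph.edgeSet, T.edgeSameOrbit (Sym2.map θ.toFun e) e')

/-- A vertex morphism: surjective on the groups and on vertices, inducing an isomorphism
of quotient graphs, restricting to a bijection on every edge stabilizer and on every
vertex stabilizer outside a single orbit of vertices, and to a surjection on the
stabilizers of the vertices of that orbit. -/
def IsVertexMorphism (θ : TreeMorphism S T) : Prop :=
  Function.Surjective θ.hom ∧ Function.Surjective θ.toFun ∧
  θ.InducesQuotientIso ∧
  (∀ e ∈ S.graph.edgeSet, Set.BijOn θ.hom (S.estab e) (T.estab (Sym2.map θ.toFun e))) ∧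
  (∀ v : S.V, Set.SurjOn θ.hom (S.vstab v) (T.vstab (θ.toFun v))) ∧
  ∃ v₀ : S.V, ∀ v : S.V, ¬ S.sameOrbit v₀ v →
    Set.BijOn θ.hom (S.vstab v) (T.vstab (θ.toFun v))

/-- The morphism `ψ` is the collapse of `S` along the `G`-invariant set `C` of edges:
its fibres are exactly the connected components of the subgraph with edge set `C`,
and adjacency downstairs comes exactly from edges of `S` not in `C`. -/
def IsCollapseAlong (ψ : TreeMorphism S T) (C : Set (Sym2 S.V)) : Prop :=
  Function.Surjective ψ.toFun ∧
  C ⊆ S.graph.edgeSet ∧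
  (∀ g : G, ∀ e ∈ C, S.edgeSmul g e ∈ C) ∧
  (∀ a b : S.V, ψ.toFun a = ψ.toFun b ↔ (SimpleGraph.fromEdgeSet C).Reachable a b) ∧
  (∀ a b : S.V, T.graph.Adj (ψ.toFun a) (ψ.toFun b) ↔
      ∃ a' b' : S.V, ψ.toFun a' = ψ.toFun a ∧ ψ.toFun b' = ψ.toFun b ∧
        S.graph.Adj a' b' ∧ s(a', b') ∉ C)

end TreeMorphism

/-- Data exhibiting the `G'`-tree `T'` as a subdivision of the `G`-tree `T` (the group
being unchanged up to isomorphism): one orbit `E₀` of edges of `T` is replaced by paths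
of length two through new midpoint vertices. -/
structure SubdivData {G G' : Type u} [Group G] [Group G'] (T : GTree G) (T' : GTree G') :
    Type u where
  /-- the inclusion of the old vertices -/
  ι : T.V → T'.V
  /-- the identification of the acting groups -/
  groupIso : G ≃* G'
  /-- the orbit of subdivided edges -/
  E₀ : Set (Sym2 T.V)
  /-- the new midpoint vertex of each subdivided edge -/
  mid : Sym2 T.V → T'.V
  ι_inj : Function.Injective ι
  ι_equivariant : ∀ (g : G) (x : T.V), ι (T.smul g x) = T'.smul (groupIso g) (ι x)
  E₀_sub : E₀ ⊆ T.graph.edgeSet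
  E₀_nonempty : E₀.Nonempty
  E₀_invariant : ∀ g : G, ∀ e ∈ E₀, T.edgeSmul g e ∈ E₀
  E₀_orbit : ∀ e ∈ E₀, ∀ f ∈ E₀, T.edgeSameOrbit e f
  mid_equivariant : ∀ g : G, ∀ e ∈ E₀, mid (T.edgeSmul g e) = T'.smul (groupIso g) (mid e)
  mid_injOn : Set.InjOn mid E₀
  mid_new : ∀ e ∈ E₀, ∀ x : T.V, mid e ≠ ι x
  vertex_cover : ∀ v : T'.V, (∃ x : T.V, v = ι x) ∨ ∃ e ∈ E₀, v = mid e
  adj_old : ∀ x y : T.V, s(x, y) ∉ E₀ → (T'.graph.Adj (ι x) (ι y) ↔ T.graph.Adj x y)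
  adj_subdivided : ∀ x y : T.V, s(x, y) ∈ E₀ →
    T'.graph.Adj (ι x) (mid s(x, y)) ∧ ¬ T'.graph.Adj (ι x) (ι y)
  adj_mid_only : ∀ e ∈ E₀, ∀ v : T'.V, T'.graph.Adj (mid e) v →
    ∃ x y : T.V, e = s(x, y) ∧ (v = ι x ∨ v = ι y)

/-- Data exhibiting the `G'`-tree `T'` as obtained from the `G`-tree `T` by a basic fold
(with trivial group homomorphism) followed by a vertex morphism. -/
structure FoldVMData {G G' : Type u} [Group G] [Group G'] (T : GTree G) (T' : GTree G') :
    Type (u + 1) where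
  /-- the intermediate `G`-tree obtained from the basic fold -/
  M : GTree G
  fold : TreeMorphism T M
  vm : TreeMorphism M T'
  fold_hom_id : fold.hom = MonoidHom.id G
  fold_is : fold.IsBasicFold
  vm_is : vm.IsVertexMorphism

/-- The composite vertex map `T.V → T'.V` of a fold-followed-by-vertex-morphism step. -/
def FoldVMData.map {G G' : Type u} [Group G] [Group G'] {T : GTree G} {T' : GTree G'}
    (f : FoldVMData T T') : T.V → T'.V :=
  fun x => f.vm.toFun (f.fold.toFun x)

/-- A step of a folding sequence: a subdivision or a basic fold followed by a vertex
morphism. -/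
def FoldingStep {G G' : Type u} [Group G] [Group G'] (T : GTree G) (T' : GTree G') :
    Type (u + 1) :=
  SubdivData T T' ⊕ FoldVMData T T'

/-- The step carries the edge set `A` into the edge set `B`: the image (respectively
the two halves, for a subdivided edge) of every edge in `A` lies in `B`. -/
def FoldingStep.Carries {G G' : Type u} [Group G] [Group G'] {T : GTree G} {T' : GTree G'}
    (st : FoldingStep T T') (A : Set (Sym2 T.V)) (B : Set (Sym2 T'.V)) : Prop :=
  match st with
  | Sum.inl d =>
      (∀ e ∈ A, e ∉ d.E₀ → Sym2.map d.ι e ∈ B) ∧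
      ∀ x y : T.V, s(x, y) ∈ A → s(x, y) ∈ d.E₀ →
        s(d.ι x, d.mid s(x, y)) ∈ B ∧ s(d.mid s(x, y), d.ι y) ∈ B
  | Sum.inr f => ∀ e ∈ A, Sym2.map f.map e ∈ B

/-- Compatibility of edge-length assignments with a step of a folding sequence: a
subdivision splits the length of each subdivided edge between its two halves and keeps
all other lengths, while a fold-and-vertex-morphism step preserves lengths (in
particular two edges folded together must have equal lengths). -/
def FoldingStep.LengthCompat {G G' : Type u} [Group G] [Group G'] {T : GTree G}
    {T' : GTree G'} (st : FoldingStep T T') (ℓ : Sym2 T.V → ℝ) (ℓ' : Sym2 T'.V → ℝ) :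
    Prop :=
  match st with
  | Sum.inl d =>
      (∀ e ∈ T.graph.edgeSet, e ∉ d.E₀ → ℓ' (Sym2.map d.ι e) = ℓ e) ∧
      ∀ x y : T.V, s(x, y) ∈ d.E₀ →
        ℓ' s(d.ι x, d.mid s(x, y)) + ℓ' s(d.mid s(x, y), d.ι y) = ℓ s(x, y)
  | Sum.inr f => ∀ e ∈ T.graph.edgeSet, ℓ' (Sym2.map f.map e) = ℓ e


section RealizationAux

open Filter Topology
open scoped ENNReal

/-! ### Ultrafilter limits in `ℝ≥0∞` -/

/-- A fixed ultrafilter on `ℕ` extending `atTop`. -/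
noncomputable def FoldingU : Ultrafilter ℕ := Ultrafilter.of atTop

/-- The limit of a sequence in the compact space `ℝ≥0∞` along `FoldingU`. -/
noncomputable def ulim (f : ℕ → ℝ≥0∞) : ℝ≥0∞ := (FoldingU.map f).lim

lemma ulim_spec (f : ℕ → ℝ≥0∞) : Tendsto f (FoldingU : Filter ℕ) (𝓝 (ulim f)) :=
  Ultrafilter.le_nhds_lim (FoldingU.map f)

lemma ulim_unique {f : ℕ → ℝ≥0∞} {a : ℝ≥0∞}
    (h : Tendsto f (FoldingU : Filter ℕ) (𝓝 a)) : ulim f = a :=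
  tendsto_nhds_unique (ulim_spec f) h

lemma ulim_congr {f g : ℕ → ℝ≥0∞} (h : ∀ᶠ n in (FoldingU : Filter ℕ), f n = g n) :
    ulim f = ulim g :=
  ulim_unique ((ulim_spec g).congr' (by filter_upwards [h] with n hn using hn.symm))

lemma ulim_const (a : ℝ≥0∞) : ulim (fun _ => a) = a := ulim_unique tendsto_const_nhds

lemma ulim_add (f g : ℕ → ℝ≥0∞) : ulim (fun n => f n + g n) = ulim f + ulim g :=
  ulim_unique ((ulim_spec f).add (ulim_spec g))

lemma atTop_mem_FoldingU {s : Set ℕ} (hs : s ∈ (atTop : Filter ℕ)) :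
    s ∈ (FoldingU : Filter ℕ) :=
  Ultrafilter.of_le atTop hs

/-! ### Basic lemmas on the edge action -/

variable {G G' : Type u} [Group G] [Group G']

namespace GTree

lemma edgeSmul_edgeSmul (T : GTree G) (g h : G) (e : Sym2 T.V) :
    T.edgeSmul g (T.edgeSmul h e) = T.edgeSmul (g * h) e := by
  unfold GTree.edgeSmul
  rw [Sym2.map_map]
  exact congrArg (fun f => Sym2.map f e) (funext fun x => (T.smul_mul g h x).symm)

lemma edgeSmul_one' (T : GTree G) (e : Sym2 T.V) : T.edgeSmul 1 e = e := by
  unfold GTree.edgeSmul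
  have : T.smul 1 = id := funext fun x => T.smul_one x
  rw [this, Sym2.map_id]
  rfl

lemma edgeSmul_mem (T : GTree G) (g : G) {e : Sym2 T.V} (he : e ∈ T.graph.edgeSet) :
    T.edgeSmul g e ∈ T.graph.edgeSet := by
  induction e using Sym2.ind with
  | _ x y =>
    have hadj : T.graph.Adj x y := (SimpleGraph.mem_edgeSet _).1 he
    show Sym2.map (T.smul g) s(x, y) ∈ _
    rw [Sym2.map_pair_eq]
    exact (SimpleGraph.mem_edgeSet _).2 (T.smul_adj g hadj)

end GTree

namespace SubdivData

variable {T : GTree G} {T' : GTree G'}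

lemma mem_E₀_smul_iff (d : SubdivData T T') (g : G) (e : Sym2 T.V) :
    T.edgeSmul g e ∈ d.E₀ ↔ e ∈ d.E₀ := by
  constructor
  · intro h
    have := d.E₀_invariant g⁻¹ _ h
    rwa [GTree.edgeSmul_edgeSmul, inv_mul_cancel, GTree.edgeSmul_one'] at this
  · exact fun h => d.E₀_invariant g e h

lemma iota_sym2_smul (d : SubdivData T T') (g : G) (e : Sym2 T.V) :
    Sym2.map d.ι (T.edgeSmul g e) = T'.edgeSmul (d.groupIso g) (Sym2.map d.ι e) := by
  unfold GTree.edgeSmul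
  rw [Sym2.map_map, Sym2.map_map]
  exact congrArg (fun f => Sym2.map f e) (funext fun x => d.ι_equivariant g x)

lemma iota_edge (d : SubdivData T T') {e : Sym2 T.V} (he : e ∈ T.graph.edgeSet)
    (hne : e ∉ d.E₀) : Sym2.map d.ι e ∈ T'.graph.edgeSet := by
  induction e using Sym2.ind with
  | _ x y =>
    rw [Sym2.map_pair_eq]
    exact (SimpleGraph.mem_edgeSet _).2
      ((d.adj_old x y hne).2 ((SimpleGraph.mem_edgeSet _).1 he))

lemma half_edges (d : SubdivData T T') {x y : T.V} (h : s(x, y) ∈ d.E₀) :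
    s(d.ι x, d.mid s(x, y)) ∈ T'.graph.edgeSet ∧
      s(d.mid s(x, y), d.ι y) ∈ T'.graph.edgeSet := by
  constructor
  · exact (SimpleGraph.mem_edgeSet _).2 (d.adj_subdivided x y h).1
  · have h' : s(y, x) ∈ d.E₀ := by rwa [Sym2.eq_swap]
    have h2 := (d.adj_subdivided y x h').1
    rw [show s(y, x) = s(x, y) from Sym2.eq_swap] at h2
    exact (SimpleGraph.mem_edgeSet _).2 h2.symm

/-- Sum of the lengths of the two halves of a subdivided edge, as a function on `Sym2`. -/
noncomputable def halfSum (d : SubdivData T T') (f : Sym2 T'.V → ℝ≥0∞) :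
    Sym2 T.V → ℝ≥0∞ :=
  Sym2.lift ⟨fun x y => f s(d.ι x, d.mid s(x, y)) + f s(d.mid s(x, y), d.ι y), by
    intro x y
    show f s(d.ι x, d.mid s(x, y)) + f s(d.mid s(x, y), d.ι y)
        = f s(d.ι y, d.mid s(y, x)) + f s(d.mid s(y, x), d.ι x)
    rw [show s(y, x) = s(x, y) from Sym2.eq_swap,
      show s(d.ι y, d.mid s(x, y)) = s(d.mid s(x, y), d.ι y) from Sym2.eq_swap,
      show s(d.mid s(x, y), d.ι x) = s(d.ι x, d.mid s(x, y)) from Sym2.eq_swap,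
      add_comm]⟩

lemma halfSum_mk (d : SubdivData T T') (f : Sym2 T'.V → ℝ≥0∞) (x y : T.V) :
    d.halfSum f s(x, y) = f s(d.ι x, d.mid s(x, y)) + f s(d.mid s(x, y), d.ι y) := rfl

end SubdivData

namespace FoldVMData

variable {T : GTree G} {T' : GTree G'}

lemma map_equivariant (fo : FoldVMData T T') (g : G) (x : T.V) :
    fo.map (T.smul g x) = T'.smul (fo.vm.hom g) (fo.map x) := by
  unfold FoldVMData.map
  rw [fo.fold.equivariant, fo.vm.equivariant, fo.fold_hom_id]
  rfl

lemma map_sym2_smul (fo : FoldVMData T T') (g : G) (e : Sym2 T.V) :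
    Sym2.map fo.map (T.edgeSmul g e) = T'.edgeSmul (fo.vm.hom g) (Sym2.map fo.map e) := by
  unfold GTree.edgeSmul
  rw [Sym2.map_map, Sym2.map_map]
  exact congrArg (fun f => Sym2.map f e) (funext fun x => fo.map_equivariant g x)

lemma map_edge (fo : FoldVMData T T') {e : Sym2 T.V} (he : e ∈ T.graph.edgeSet) :
    Sym2.map fo.map e ∈ T'.graph.edgeSet := by
  induction e using Sym2.ind with
  | _ x y =>
    rw [Sym2.map_pair_eq]
    exact (SimpleGraph.mem_edgeSet _).2
      (fo.vm.map_adj (fo.fold.map_adj ((SimpleGraph.mem_edgeSet _).1 he)))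

end FoldVMData

/-! ### Pulling back lengths along one step -/

open Classical in
/-- Pull back a length function along a folding step. -/
noncomputable def pullStep {T : GTree G} {T' : GTree G'} (st : FoldingStep T T')
    (f : Sym2 T'.V → ℝ≥0∞) : Sym2 T.V → ℝ≥0∞ :=
  match st with
  | Sum.inl d => fun e => if e ∈ d.E₀ then d.halfSum f e else f (Sym2.map d.ι e)
  | Sum.inr fo => fun e => f (Sym2.map fo.map e)

lemma pullStep_inr {T : GTree G} {T' : GTree G'} (fo : FoldVMData T T')
    (f : Sym2 T'.V → ℝ≥0∞) (e : Sym2 T.V) :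
    pullStep (Sum.inr fo) f e = f (Sym2.map fo.map e) := rfl

lemma pullStep_inl_not_mem {T : GTree G} {T' : GTree G'} (d : SubdivData T T')
    (f : Sym2 T'.V → ℝ≥0∞) (e : Sym2 T.V) (h : e ∉ d.E₀) :
    pullStep (Sum.inl d) f e = f (Sym2.map d.ι e) := by
  simp only [pullStep, if_neg h]

lemma pullStep_inl_mem {T : GTree G} {T' : GTree G'} (d : SubdivData T T')
    (f : Sym2 T'.V → ℝ≥0∞) (x y : T.V) (h : s(x, y) ∈ d.E₀) :
    pullStep (Sum.inl d) f s(x, y)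
      = f s(d.ι x, d.mid s(x, y)) + f s(d.mid s(x, y), d.ι y) := by
  simp only [pullStep, if_pos h, SubdivData.halfSum_mk]

lemma pullStep_pos {T : GTree G} {T' : GTree G'} (st : FoldingStep T T')
    {f : Sym2 T'.V → ℝ≥0∞} (hf : ∀ e' ∈ T'.graph.edgeSet, f e' ≠ 0 ∧ f e' ≠ ⊤) :
    ∀ e ∈ T.graph.edgeSet, pullStep st f e ≠ 0 ∧ pullStep st f e ≠ ⊤ := by
  intro e he
  match st with
  | Sum.inr fo =>
    rw [pullStep_inr]
    exact hf _ (fo.map_edge he)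
  | Sum.inl d =>
    induction e using Sym2.ind with
    | _ x y =>
      by_cases hm : s(x, y) ∈ d.E₀
      · rw [pullStep_inl_mem d f x y hm]
        obtain ⟨h1, h2⟩ := d.half_edges hm
        obtain ⟨p1, q1⟩ := hf _ h1
        obtain ⟨p2, q2⟩ := hf _ h2
        refine ⟨fun h => p1 ?_, ENNReal.add_ne_top.2 ⟨q1, q2⟩⟩
        exact (add_eq_zero.1 h).1
      · rw [pullStep_inl_not_mem d f _ hm]
        exact hf _ (d.iota_edge he hm)

lemma pullStep_inv {T : GTree G} {T' : GTree G'} (st : FoldingStep T T')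
    {f : Sym2 T'.V → ℝ≥0∞} (hf : ∀ (g' : G') (e' : Sym2 T'.V), f (T'.edgeSmul g' e') = f e') :
    ∀ (g : G) (e : Sym2 T.V), pullStep st f (T.edgeSmul g e) = pullStep st f e := by
  intro g e
  match st with
  | Sum.inr fo =>
    rw [pullStep_inr, pullStep_inr, fo.map_sym2_smul, hf]
  | Sum.inl d =>
    induction e using Sym2.ind with
    | _ x y =>
      have hsm : T.edgeSmul g s(x, y) = s(T.smul g x, T.smul g y) := Sym2.map_pair_eq _ _ _
      by_cases hm : s(x, y) ∈ d.E₀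
      · have hm' : s(T.smul g x, T.smul g y) ∈ d.E₀ := by
          rw [← hsm]; exact d.E₀_invariant g _ hm
        rw [hsm, pullStep_inl_mem d f _ _ hm', pullStep_inl_mem d f _ _ hm]
        have hmid : d.mid s(T.smul g x, T.smul g y) = T'.smul (d.groupIso g) (d.mid s(x, y)) := by
          rw [← hsm]
          exact d.mid_equivariant g _ hm
        rw [hmid, d.ι_equivariant, d.ι_equivariant]
        have e1 : s(T'.smul (d.groupIso g) (d.ι x), T'.smul (d.groupIso g) (d.mid s(x, y)))
            = T'.edgeSmul (d.groupIso g) s(d.ι x, d.mid s(x, y)) :=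
          (Sym2.map_pair_eq _ _ _).symm
        have e2 : s(T'.smul (d.groupIso g) (d.mid s(x, y)), T'.smul (d.groupIso g) (d.ι y))
            = T'.edgeSmul (d.groupIso g) s(d.mid s(x, y), d.ι y) :=
          (Sym2.map_pair_eq _ _ _).symm
        rw [e1, e2, hf, hf]
      · have hm' : T.edgeSmul g s(x, y) ∉ d.E₀ := fun h => hm ((d.mem_E₀_smul_iff g _).1 h)
        rw [pullStep_inl_not_mem d f _ hm', pullStep_inl_not_mem d f _ hm,
          d.iota_sym2_smul, hf]

end RealizationAux

section RealizationSeq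

open Filter Topology
open scoped ENNReal

variable {Gs : ℕ → Type u} [∀ n, Group (Gs n)] (T : ∀ n : ℕ, GTree (Gs n))
  (step : ∀ n : ℕ, FoldingStep (T n) (T (n + 1)))

/-- Iterated pullback: `Dfun j k` is the length function at level `k` obtained by pulling
back the constant function `1` from level `k + j`. -/
noncomputable def Dfun : ℕ → ∀ k : ℕ, Sym2 (T k).V → ℝ≥0∞
  | 0 => fun _ _ => 1
  | j + 1 => fun k => pullStep (step k) (Dfun j (k + 1))

lemma Dfun_succ (j k : ℕ) :
    Dfun T step (j + 1) k = pullStep (step k) (Dfun T step j (k + 1)) := rfl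

lemma Dfun_pos (j : ℕ) : ∀ k, ∀ e ∈ (T k).graph.edgeSet,
    Dfun T step j k e ≠ 0 ∧ Dfun T step j k e ≠ ⊤ := by
  induction j with
  | zero =>
    intro k e _
    exact ⟨one_ne_zero, ENNReal.one_ne_top⟩
  | succ j ih =>
    intro k e he
    exact pullStep_pos (step k) (fun e' he' => ih (k + 1) e' he') e he

lemma Dfun_inv (j : ℕ) : ∀ k (g : Gs k) (e : Sym2 (T k).V),
    Dfun T step j k ((T k).edgeSmul g e) = Dfun T step j k e := by
  induction j with
  | zero => intro k g e; rfl
  | succ j ih =>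
    intro k g e
    exact pullStep_inv (step k) (fun g' e' => ih (k + 1) g' e') g e

lemma exists_edge {G G' : Type u} [Group G] [Group G'] {T : GTree G} {T' : GTree G'}
    (st : FoldingStep T T') : ∃ e, e ∈ T.graph.edgeSet := by
  rcases st with d | fo
  · obtain ⟨e, he⟩ := d.E₀_nonempty
    exact ⟨e, d.E₀_sub he⟩
  · obtain ⟨-, -, ⟨v, x, y, -, hvx, -, -⟩, -⟩ := fo.fold_is
    exact ⟨s(v, x), (SimpleGraph.mem_edgeSet _).2 hvx⟩

variable (e₀ : Sym2 (T 0).V)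

/-- The limiting length function: normalize the iterated pullbacks at `e₀` and take an
ultrafilter limit in `ℝ≥0∞`. -/
noncomputable def hatL (k : ℕ) (e : Sym2 (T k).V) : ℝ≥0∞ :=
  ulim fun n => (Dfun T step n 0 e₀)⁻¹ * Dfun T step (n - k) k e

lemma hatL_inv (k : ℕ) (g : Gs k) (e : Sym2 (T k).V) :
    hatL T step e₀ k ((T k).edgeSmul g e) = hatL T step e₀ k e := by
  unfold hatL
  exact congrArg ulim (funext fun n => by rw [Dfun_inv])

lemma hatL_base (he₀ : e₀ ∈ (T 0).graph.edgeSet) : hatL T step e₀ 0 e₀ = 1 := by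
  unfold hatL
  have h : (fun n => (Dfun T step n 0 e₀)⁻¹ * Dfun T step (n - 0) 0 e₀)
      = fun _ => (1 : ℝ≥0∞) := by
    funext n
    rw [Nat.sub_zero]
    exact ENNReal.inv_mul_cancel (Dfun_pos T step n 0 e₀ he₀).1 (Dfun_pos T step n 0 e₀ he₀).2
  rw [h, ulim_const]

lemma hatL_fold {m : ℕ} {fo : FoldVMData (T m) (T (m + 1))} (hm : step m = Sum.inr fo)
    (e : Sym2 (T m).V) :
    hatL T step e₀ (m + 1) (Sym2.map fo.map e) = hatL T step e₀ m e := by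
  unfold hatL
  apply ulim_congr
  filter_upwards [atTop_mem_FoldingU (mem_atTop (m + 1))] with n hn
  have h1 : n - m = (n - (m + 1)) + 1 := by omega
  rw [h1, Dfun_succ, hm, pullStep_inr]

lemma hatL_subdiv_old {m : ℕ} {d : SubdivData (T m) (T (m + 1))} (hm : step m = Sum.inl d)
    (e : Sym2 (T m).V) (he : e ∉ d.E₀) :
    hatL T step e₀ (m + 1) (Sym2.map d.ι e) = hatL T step e₀ m e := by
  unfold hatL
  apply ulim_congr
  filter_upwards [atTop_mem_FoldingU (mem_atTop (m + 1))] with n hn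
  have h1 : n - m = (n - (m + 1)) + 1 := by omega
  rw [h1, Dfun_succ, hm, pullStep_inl_not_mem _ _ _ he]

lemma hatL_subdiv_new {m : ℕ} {d : SubdivData (T m) (T (m + 1))} (hm : step m = Sum.inl d)
    (x y : (T m).V) (he : s(x, y) ∈ d.E₀) :
    hatL T step e₀ (m + 1) s(d.ι x, d.mid s(x, y))
      + hatL T step e₀ (m + 1) s(d.mid s(x, y), d.ι y) = hatL T step e₀ m s(x, y) := by
  unfold hatL
  rw [← ulim_add]
  apply ulim_congr
  filter_upwards [atTop_mem_FoldingU (mem_atTop (m + 1))] with n hn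
  have h1 : n - m = (n - (m + 1)) + 1 := by omega
  rw [h1, Dfun_succ, hm, pullStep_inl_mem _ _ _ _ he, mul_add]

end RealizationSeq

/-- Theorem 3.1: an irreducible folding sequence of combinatorial trees (each `T n` a
minimal `G n`-tree with `G n` finitely generated) can be realized as a folding sequence
of simplicial R-trees: there are strictly positive edge lengths, constant on orbits,
compatible with all the subdivisions and folds of the sequence. -/
theorem irreducible_folding_sequence_realizable {Gs : ℕ → Type u} [∀ n, Group (Gs n)]
    (T : ∀ n : ℕ, GTree (Gs n))
    (hmin : ∀ n, (T n).Minimal)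
    (hfg : ∀ n, Group.FG (Gs n))
    (step : ∀ n : ℕ, FoldingStep (T n) (T (n + 1)))
    (hirr : ¬ ∃ (N : ℕ) (E : ∀ m : ℕ, Set (Sym2 (T m).V)),
      ∀ m : ℕ, N ≤ m → (E m).Nonempty ∧ E m ⊂ (T m).graph.edgeSet ∧
        (∀ g : Gs m, ∀ e ∈ E m, (T m).edgeSmul g e ∈ E m) ∧
        (step m).Carries (E m) (E (m + 1))) :
    ∃ ℓ : ∀ n : ℕ, Sym2 (T n).V → ℝ,
      (∀ n, ∀ e ∈ (T n).graph.edgeSet, 0 < ℓ n e) ∧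
      (∀ (n : ℕ) (g : Gs n) (e : Sym2 (T n).V), ℓ n ((T n).edgeSmul g e) = ℓ n e) ∧
      ∀ n : ℕ, (step n).LengthCompat (ℓ n) (ℓ (n + 1)) := by
  classical
  obtain ⟨e₀, he₀⟩ := exists_edge (step 0)
  -- the limiting (extended-real-valued) length functions
  -- key splitting lemma: the length of an edge is realized at the next level
  have hsplit : ∀ m, ∀ e ∈ (T m).graph.edgeSet,
      (∃ e' ∈ (T (m + 1)).graph.edgeSet, hatL T step e₀ (m + 1) e' = hatL T step e₀ m e) ∨
      (∃ e1 ∈ (T (m + 1)).graph.edgeSet, ∃ e2 ∈ (T (m + 1)).graph.edgeSet,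
        hatL T step e₀ (m + 1) e1 + hatL T step e₀ (m + 1) e2 = hatL T step e₀ m e) := by
    intro m e he
    induction e using Sym2.ind with
    | _ x y =>
      rcases hstep : step m with d | fo
      · by_cases hmem : s(x, y) ∈ d.E₀
        · right
          obtain ⟨h1, h2⟩ := d.half_edges hmem
          exact ⟨_, h1, _, h2, hatL_subdiv_new T step e₀ hstep x y hmem⟩
        · left
          exact ⟨_, d.iota_edge he hmem, hatL_subdiv_old T step e₀ hstep _ hmem⟩
      · left
        exact ⟨_, fo.map_edge he, hatL_fold T step e₀ hstep _⟩
  -- at every level there is an edge whose limiting length is neither 0 nor ∞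
  have hex : ∀ m, ∃ e ∈ (T m).graph.edgeSet,
      hatL T step e₀ m e ≠ 0 ∧ hatL T step e₀ m e ≠ ⊤ := by
    intro m
    induction m with
    | zero =>
      refine ⟨e₀, he₀, ?_, ?_⟩ <;> rw [hatL_base T step e₀ he₀]
      · exact one_ne_zero
      · exact ENNReal.one_ne_top
    | succ m ih =>
      obtain ⟨e, he, h0, ht⟩ := ih
      rcases hsplit m e he with ⟨e', he', heq⟩ | ⟨e1, h1, e2, h2, heq⟩
      · exact ⟨e', he', by rw [heq]; exact h0, by rw [heq]; exact ht⟩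
      · have ht' : hatL T step e₀ (m + 1) e1 + hatL T step e₀ (m + 1) e2 ≠ ⊤ := by
          rw [heq]; exact ht
        obtain ⟨q1, q2⟩ := ENNReal.add_ne_top.1 ht'
        by_cases hz : hatL T step e₀ (m + 1) e1 = 0
        · refine ⟨e2, h2, fun h2z => h0 ?_, q2⟩
          rw [← heq, hz, h2z, add_zero]
        · exact ⟨e1, h1, hz, q1⟩
  -- no edge has limiting length 0
  have hzero : ∀ m, ∀ e ∈ (T m).graph.edgeSet, hatL T step e₀ m e ≠ 0 := by
    by_contra hcon
    push_neg at hcon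
    obtain ⟨N, e, heN, h0⟩ := hcon
    apply hirr
    refine ⟨N, fun m => {e | e ∈ (T m).graph.edgeSet ∧ hatL T step e₀ m e = 0}, ?_⟩
    have hne : ∀ m, N ≤ m → ∃ f, f ∈ (T m).graph.edgeSet ∧ hatL T step e₀ m f = 0 := by
      intro m hm
      induction m, hm using Nat.le_induction with
      | base => exact ⟨e, heN, h0⟩
      | succ m hm ih =>
        obtain ⟨f, hf, hf0⟩ := ih
        rcases hsplit m f hf with ⟨e', he', heq⟩ | ⟨e1, h1, e2, h2, heq⟩
        · exact ⟨e', he', heq.trans hf0⟩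
        · exact ⟨e1, h1, (add_eq_zero.1 (heq.trans hf0)).1⟩
    intro m hm
    refine ⟨hne m hm, ?_, ?_, ?_⟩
    · obtain ⟨p, hp, hp0, -⟩ := hex m
      rw [Set.ssubset_iff_of_subset (fun x hx => hx.1)]
      exact ⟨p, hp, fun h => hp0 h.2⟩
    · rintro g f ⟨hf, hf0⟩
      exact ⟨GTree.edgeSmul_mem _ g hf, (hatL_inv T step e₀ m g f).trans hf0⟩
    · rcases hstep : step m with d | fo
      · refine ⟨?_, ?_⟩
        · rintro f ⟨hf, hf0⟩ hnm
          exact ⟨d.iota_edge hf hnm, (hatL_subdiv_old T step e₀ hstep f hnm).trans hf0⟩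
        · rintro x y ⟨hf, hf0⟩ hmem
          have heq := hatL_subdiv_new T step e₀ hstep x y hmem
          rw [hf0] at heq
          obtain ⟨hz1, hz2⟩ := add_eq_zero.1 heq
          obtain ⟨h1, h2⟩ := d.half_edges hmem
          exact ⟨⟨h1, hz1⟩, ⟨h2, hz2⟩⟩
      · rintro f ⟨hf, hf0⟩
        exact ⟨fo.map_edge hf, (hatL_fold T step e₀ hstep f).trans hf0⟩
  -- no edge has limiting length ∞
  have htop : ∀ m, ∀ e ∈ (T m).graph.edgeSet, hatL T step e₀ m e ≠ ⊤ := by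
    by_contra hcon
    push_neg at hcon
    obtain ⟨N, e, heN, hT⟩ := hcon
    apply hirr
    refine ⟨N, fun m => {e | e ∈ (T m).graph.edgeSet ∧ hatL T step e₀ m e ≠ ⊤}, ?_⟩
    have htopex : ∀ m, N ≤ m → ∃ f ∈ (T m).graph.edgeSet, hatL T step e₀ m f = ⊤ := by
      intro m hm
      induction m, hm using Nat.le_induction with
      | base => exact ⟨e, heN, hT⟩
      | succ m hm ih =>
        obtain ⟨f, hf, hfT⟩ := ih
        rcases hsplit m f hf with ⟨e', he', heq⟩ | ⟨e1, h1, e2, h2, heq⟩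
        · exact ⟨e', he', heq.trans hfT⟩
        · rcases ENNReal.add_eq_top.1 (heq.trans hfT) with h | h
          · exact ⟨e1, h1, h⟩
          · exact ⟨e2, h2, h⟩
    intro m hm
    refine ⟨?_, ?_, ?_, ?_⟩
    · obtain ⟨p, hp, -, hpt⟩ := hex m
      exact ⟨p, hp, hpt⟩
    · obtain ⟨p, hp, hpT⟩ := htopex m hm
      rw [Set.ssubset_iff_of_subset (fun x hx => hx.1)]
      exact ⟨p, hp, fun h => h.2 hpT⟩
    · rintro g f ⟨hf, hft⟩
      exact ⟨GTree.edgeSmul_mem _ g hf, fun h => hft ((hatL_inv T step e₀ m g f).symm.trans h)⟩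
    · rcases hstep : step m with d | fo
      · refine ⟨?_, ?_⟩
        · rintro f ⟨hf, hft⟩ hnm
          refine ⟨d.iota_edge hf hnm, fun h => hft ?_⟩
          rw [← hatL_subdiv_old T step e₀ hstep f hnm]
          exact h
        · rintro x y ⟨hf, hft⟩ hmem
          have heq := hatL_subdiv_new T step e₀ hstep x y hmem
          have hsum : hatL T step e₀ (m + 1) s(d.ι x, d.mid s(x, y))
              + hatL T step e₀ (m + 1) s(d.mid s(x, y), d.ι y) ≠ ⊤ := by
            rw [heq]; exact hft
          obtain ⟨q1, q2⟩ := ENNReal.add_ne_top.1 hsum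
          obtain ⟨h1, h2⟩ := d.half_edges hmem
          exact ⟨⟨h1, q1⟩, ⟨h2, q2⟩⟩
      · rintro f ⟨hf, hft⟩
        refine ⟨fo.map_edge hf, fun h => hft ?_⟩
        rw [← hatL_fold T step e₀ hstep f]
        exact h
  -- the real-valued length functions
  refine ⟨fun n e => (hatL T step e₀ n e).toReal, ?_, ?_, ?_⟩
  · intro n e he
    exact ENNReal.toReal_pos (hzero n e he) (htop n e he)
  · intro n g e
    show (hatL T step e₀ n ((T n).edgeSmul g e)).toReal = (hatL T step e₀ n e).toReal
    rw [hatL_inv]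
  · intro n
    rcases hstep : step n with d | fo
    · refine ⟨?_, ?_⟩
      · intro e he hnm
        exact congrArg ENNReal.toReal (hatL_subdiv_old T step e₀ hstep e hnm)
      · intro x y hmem
        obtain ⟨h1, h2⟩ := d.half_edges hmem
        dsimp only
        rw [← congrArg ENNReal.toReal (hatL_subdiv_new T step e₀ hstep x y hmem),
          ENNReal.toReal_add (htop _ _ h1) (htop _ _ h2)]
    · intro e he
      exact congrArg ENNReal.toReal (hatL_fold T step e₀ hstep e)
end
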